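/- Let t, B and a_1, …, a_n be positive integers with n ≥ 2, Σ_{1≤i≤n} a_i = tB and a_i > tn for all i, and set k = (t−1)n + 3B + 1. Let G be the graph constructed as follows: start with the complete bipartite graph between U = {u_1, …, u_n} and V = {v_1, …, v_t}; attach a_i − 1 pendant vertices to each u_i and 2B pendant vertices to each v_j; add a new vertex w together with 3B pendant neighbors of w; and add the edge {w, u_n}. Then there exists F ⊆ E(G) with |F| + max_{C ∈ cc(G−F)} |E(C)| ≤ k if and only if there exists a partition (I_1, …, I_t) of {1, …, n} such that Σ_{i∈I_j} a_i = B for every j ∈ {1, …, t}. -/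

import Mathlib

namespace VI

open SimpleGraph

variable {V : Type*}

/-- Total weight of a set of vertices. -/
noncomputable def setWeight (w : V → ℕ) (X : Set V) : ℕ := ∑ᶠ v ∈ X, w v

/-- Maximum weight of a connected component of `G − S`. -/
noncomputable def compMax (G : SimpleGraph V) (w : V → ℕ) (S : Set V) : ℕ :=
  sSup {n | ∃ C : (G.induce Sᶜ).ConnectedComponent, n = setWeight w (Subtype.val '' C.supp)}

/-- `w(S) + max_{C ∈ cc(G−S)} w(V(C))`. -/
noncomputable def viCost (G : SimpleGraph V) (w : V → ℕ) (S : Set V) : ℕ :=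
  setWeight w S + compMax G w S

/-- The weighted vertex integrity of `G`. -/
noncomputable def wvi (G : SimpleGraph V) (w : V → ℕ) : ℕ := ⨅ S : Set V, viCost G w S

/-- Maximum number of vertices of a connected component of `G − S`. -/
noncomputable def uCompMax (G : SimpleGraph V) (S : Set V) : ℕ :=
  sSup {n | ∃ C : (G.induce Sᶜ).ConnectedComponent, n = C.supp.ncard}

/-- `|S| + max_{C ∈ cc(G−S)} |V(C)|`. -/
noncomputable def uViCost (G : SimpleGraph V) (S : Set V) : ℕ := S.ncard + uCompMax G S

/-- The (unweighted) vertex integrity of `G`. -/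
noncomputable def uvi (G : SimpleGraph V) : ℕ := ⨅ S : Set V, uViCost G S

/-- A vertex `v` is redundant w.r.t. `S` if at most one connected component of `G − S`
contains a neighbor of `v`. -/
def Redundant (G : SimpleGraph V) (S : Set V) (v : V) : Prop :=
  {C : (G.induce Sᶜ).ConnectedComponent | ∃ u : (Sᶜ : Set V), G.Adj v ↑u ∧ u ∈ C.supp}.Subsingleton

/-- `S` is irredundant if it contains no redundant vertex. -/
def Irredundant (G : SimpleGraph V) (S : Set V) : Prop := ∀ v ∈ S, ¬ Redundant G S v

end VI

namespace VI

/-- Vertices: `u_1, …, u_n`; `v_1, …, v_t`; the `a_i − 1` pendants of each `u_i`;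
the `2B` pendants of each `v_j`; the vertex `w`; and the `3B` pendants of `w`. -/
def LIVertex (n t B : ℕ) (a : Fin n → ℕ) : Type :=
  Fin n ⊕ Fin t ⊕ (Σ i : Fin n, Fin (a i - 1)) ⊕ (Fin t × Fin (2 * B)) ⊕
    Unit ⊕ Fin (3 * B)

/-- Edges: the complete bipartite graph between the `u_i` and the `v_j`; the pendant edges;
the edges from `w` to its pendants; and the edge `{w, u_n}`. -/
def liRel (n t B : ℕ) (a : Fin n → ℕ) : LIVertex n t B a → LIVertex n t B a → Prop
  | .inl _, .inr (.inl _) => True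
  | .inl i, .inr (.inr (.inl s)) => i = s.1
  | .inr (.inl j), .inr (.inr (.inr (.inl (j', _)))) => j = j'
  | .inr (.inr (.inr (.inr (.inl _)))), .inr (.inr (.inr (.inr (.inr _)))) => True
  | .inl i, .inr (.inr (.inr (.inr (.inl _)))) => (i : ℕ) = n - 1
  | _, _ => False

/-- The graph of the reduction from Unary Bin Packing to Line Integrity. -/
def liGraph (n t B : ℕ) (a : Fin n → ℕ) : SimpleGraph (LIVertex n t B a) :=
  SimpleGraph.fromRel (liRel n t B a)

end VI

/-!
A bin packing `f` gives the cut made of `{w, u_n}` and the edges `u_i v_j` with `j ≠ f i`: it has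
`(t - 1) n + 1` edges and leaves the star of `w` and, for each `j`, a component with
`2B + ∑_{f i = j} a_i = 3B` edges.

Conversely, all lower bounds on the cost of a cut `F` come from one inequality: if the uncut edges
of a set `T` lie in one component and `D ⊆ F` is disjoint from `T`, then
`|T| + |D| ≤ |F| + max_C |E(C)|`. As `a_i > tn`, it forces `{w, u_n} ∈ F` (with `T` made of
`{w, u_n}` and the pendant edges at `w` and `u_n`) and lets every `u_i` keep at most one edge to
`V` (with `T` made of two edges `u_i v_j`, `u_i v_j'` and the pendant edges at their ends). So for
some `g` every edge `u_i v_j` with `j ≠ g i` is cut, and the budget leaves no room for cutting any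
`u_i v_{g i}` as well. Then the component of `v_j` has at least `2B + ∑_{g i = j} a_i` edges, so
`∑_{g i = j} a_i ≤ B`; as these sums add up to `tB`, all of them equal `B`.
-/

namespace VI
open SimpleGraph Finset

section ComponentEdges

variable {V : Type*} {G : SimpleGraph V}

def componentEdges (C : G.ConnectedComponent) : Set (Sym2 V) :=
  {e ∈ G.edgeSet | ∀ v ∈ e, v ∈ C.supp}

variable (G) in
noncomputable def maxComponentEdges : ℕ :=
  sSup {m | ∃ C : G.ConnectedComponent, m = (componentEdges C).ncard}

lemma ncard_componentEdges_le [Finite V] (C : G.ConnectedComponent) :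
    (componentEdges C).ncard ≤ maxComponentEdges G := by
  refine le_csSup ⟨(Set.univ : Set (Sym2 V)).ncard, ?_⟩ ⟨C, rfl⟩
  rintro _ ⟨C', rfl⟩
  exact Set.ncard_le_ncard (Set.subset_univ _)

lemma reachable_of_mem_edgeSet {x y z : V} {e : Sym2 V} (he : e ∈ G.edgeSet) (hy : y ∈ e)
    (hz : z ∈ e) (hxy : G.Reachable x y) : G.Reachable x z := by
  induction e using Sym2.ind with | h p q =>
  rcases Sym2.mem_iff.1 hy with rfl | rfl <;> rcases Sym2.mem_iff.1 hz with rfl | rfl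
  exacts [hxy, hxy.trans he.reachable, hxy.trans he.symm.reachable, hxy]

-- The labelling `π` is constant along edges, hence on components, so the edges of a component
-- all lie in one class `T r`.
lemma maxComponentEdges_le_of_cover [Finite V] {R : Type*} (π : V → R)
    (T : R → Set (Sym2 V)) (hT : ∀ e ∈ G.edgeSet, ∃ r, (∀ v ∈ e, π v = r) ∧ e ∈ T r)
    {m : ℕ} (hm : ∀ r, (T r).ncard ≤ m) : maxComponentEdges G ≤ m := by
  have hπ : ∀ {x y}, G.Reachable x y → π x = π y := by
    rintro x y ⟨p⟩
    induction p with
    | nil => rfl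
    | cons hxy _ ih =>
      obtain ⟨r, hr, -⟩ := hT s(_, _) hxy
      exact (hr _ (Sym2.mem_mk_left _ _)).trans ((hr _ (Sym2.mem_mk_right _ _)).symm.trans ih)
  refine csSup_le' ?_
  rintro _ ⟨C, rfl⟩
  obtain ⟨x, rfl⟩ := C.exists_rep
  refine le_trans (Set.ncard_le_ncard fun e ⟨he, hC⟩ => ?_) (hm (π x))
  obtain ⟨r, hr, heT⟩ := hT e he
  induction e using Sym2.ind with | h y _ =>
  have hy := hC y (Sym2.mem_mk_left _ _)
  rwa [← hr y (Sym2.mem_mk_left _ _), hπ (ConnectedComponent.exact hy)] at heT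

variable (G) in
noncomputable def lineIntegrityCost (F : Set (Sym2 V)) : ℕ :=
  F.ncard + maxComponentEdges (G.deleteEdges F)

-- The cut edges of `T` and those of `D` are counted in `|F|`; the uncut edges of `T` all lie in
-- the component of `x`.
lemma card_add_card_le_lineIntegrityCost [Finite V] {F : Set (Sym2 V)} {T D : Finset (Sym2 V)}
    (x : V) (hTG : (T : Set (Sym2 V)) ⊆ G.edgeSet)
    (hT : ∀ e ∈ T, e ∉ F → ∃ y ∈ e, (G.deleteEdges F).Reachable x y)
    (hDF : ∀ e ∈ D, e ∈ F) (hDT : Disjoint D T) :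
    #T + #D ≤ lineIntegrityCost G F := by
  classical
  have hcut : #(T.filter (· ∈ F) ∪ D) ≤ F.ncard := by
    rw [← Set.ncard_coe_finset]
    refine Set.ncard_le_ncard fun e he => ?_
    rcases mem_union.1 he with he | he
    exacts [(mem_filter.1 he).2, hDF e he]
  have hkept : #(T.filter (· ∉ F)) ≤ maxComponentEdges (G.deleteEdges F) := by
    refine le_trans ?_ (ncard_componentEdges_le ((G.deleteEdges F).connectedComponentMk x))
    rw [← Set.ncard_coe_finset]
    refine Set.ncard_le_ncard fun e he => ?_
    obtain ⟨heT, heF⟩ := mem_filter.1 he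
    have he' : e ∈ (G.deleteEdges F).edgeSet := by
      rw [edgeSet_deleteEdges]; exact ⟨hTG heT, heF⟩
    obtain ⟨y, hy, hxy⟩ := hT e heT heF
    exact ⟨he', fun z hz =>
      ConnectedComponent.sound (reachable_of_mem_edgeSet he' hy hz hxy).symm⟩
  rw [card_union_of_disjoint (hDT.symm.mono_left (filter_subset _ _))] at hcut
  have := card_filter_add_card_filter_not (s := T) (· ∈ F)
  rw [lineIntegrityCost]
  omega

end ComponentEdges

section Construction

variable {n t B : ℕ} {a : Fin n → ℕ}

local notation "𝒱" => LIVertex n t B a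
local notation "𝒢" => liGraph n t B a

instance : Fintype 𝒱 := by unfold LIVertex; infer_instance
instance : DecidableEq 𝒱 := by unfold LIVertex; infer_instance

-- `item i`, `bin j` and `hub` are the vertices `u_i`, `v_j` and `w`.
abbrev item (i : Fin n) : 𝒱 := .inl i
abbrev bin (j : Fin t) : 𝒱 := .inr (.inl j)
abbrev itemPendant (i : Fin n) (p : Fin (a i - 1)) : 𝒱 := .inr (.inr (.inl ⟨i, p⟩))
abbrev binPendant (j : Fin t) (p : Fin (2 * B)) : 𝒱 := .inr (.inr (.inr (.inl (j, p))))
abbrev hub : 𝒱 := .inr (.inr (.inr (.inr (.inl ()))))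
abbrev hubPendant (p : Fin (3 * B)) : 𝒱 := .inr (.inr (.inr (.inr (.inr p))))

-- `Sum.inl.injEq` and `Sum.inr.injEq` do not fire on equations stated at the type `LIVertex`.
@[simp] lemma LIVertex.inl_inj {i i' : Fin n} : @Eq 𝒱 (.inl i) (.inl i') ↔ i = i' :=
  Sum.inl_injective.eq_iff

@[simp] lemma LIVertex.inr_inj
    {x y : Fin t ⊕ (Σ i : Fin n, Fin (a i - 1)) ⊕ (Fin t × Fin (2 * B)) ⊕ Unit ⊕ Fin (3 * B)} :
    @Eq 𝒱 (.inr x) (.inr y) ↔ x = y :=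
  Sum.inr_injective.eq_iff

lemma mem_edgeSet_liGraph {e : Sym2 𝒱} (he : e ∈ (𝒢).edgeSet) :
    (∃ i j, e = s(item i, bin j)) ∨ (∃ i p, e = s(item i, itemPendant i p)) ∨
    (∃ j p, e = s(bin j, binPendant j p)) ∨ (∃ p, e = s(hub, hubPendant p)) ∨
    ∃ i : Fin n, (i : ℕ) = n - 1 ∧ e = s(item i, hub) := by
  induction e using Sym2.ind with | h x y =>
  obtain ⟨-, hxy⟩ := (fromRel_adj _ x y).1 he
  clear he
  wlog h : liRel n t B a x y generalizing x y
  · rw [Sym2.eq_swap]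
    exact this y x hxy.symm (hxy.resolve_left h)
  rcases x with i | j | ⟨i, p⟩ | ⟨j, p⟩ | ⟨⟨⟩⟩ | p <;>
    rcases y with i' | j' | ⟨i', p'⟩ | ⟨j', p'⟩ | ⟨⟨⟩⟩ | p' <;>
    simp only [liRel] at h
  · exact .inl ⟨i, j', rfl⟩
  · subst h; exact .inr (.inl ⟨i, p', rfl⟩)
  · exact .inr (.inr (.inr (.inr ⟨i, h, rfl⟩)))
  · subst h; exact .inr (.inr (.inl ⟨j, p', rfl⟩))
  · exact .inr (.inr (.inr (.inl ⟨p', rfl⟩)))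

@[simp] lemma adj_item_bin (i : Fin n) (j : Fin t) : (𝒢).Adj (item i) (bin j) := by
  simp [liGraph, liRel]

@[simp] lemma adj_item_itemPendant (i : Fin n) (p : Fin (a i - 1)) :
    (𝒢).Adj (item i) (itemPendant i p) := by
  simp [liGraph, liRel]

@[simp] lemma adj_bin_binPendant (j : Fin t) (p : Fin (2 * B)) :
    (𝒢).Adj (bin j) (binPendant j p) := by
  simp [liGraph, liRel]

@[simp] lemma adj_hub_hubPendant (p : Fin (3 * B)) : (𝒢).Adj hub (hubPendant p) := by
  simp [liGraph, liRel]

lemma adj_item_hub {i : Fin n} (hi : (i : ℕ) = n - 1) : (𝒢).Adj (item i) hub := by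
  simp [liGraph, liRel, hi]

def itemPendantEdges (i : Fin n) : Finset (Sym2 𝒱) :=
  univ.image fun p => s(item i, itemPendant i p)

def binPendantEdges (j : Fin t) : Finset (Sym2 𝒱) :=
  univ.image fun p => s(bin j, binPendant j p)

def hubPendantEdges : Finset (Sym2 𝒱) :=
  univ.image fun p => s(hub, hubPendant p)

def crossEdges (g : Fin n → Fin t) : Finset (Sym2 𝒱) :=
  (univ.filter fun p : Fin n × Fin t => g p.1 ≠ p.2).image fun p => s(item p.1, bin p.2)

def bagEdges (g : Fin n → Fin t) (j : Fin t) : Finset (Sym2 𝒱) :=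
  binPendantEdges j ∪
    (univ.filter fun i => g i = j).biUnion fun i => insert s(item i, bin j) (itemPendantEdges i)

lemma card_itemPendantEdges (i : Fin n) : #(itemPendantEdges i : Finset (Sym2 𝒱)) = a i - 1 := by
  rw [itemPendantEdges, card_image_of_injective _ fun p q h => by simpa using h, card_univ,
    Fintype.card_fin]

lemma card_binPendantEdges (j : Fin t) : #(binPendantEdges j : Finset (Sym2 𝒱)) = 2 * B := by
  rw [binPendantEdges, card_image_of_injective _ fun p q h => by simpa using h, card_univ,
    Fintype.card_fin]

lemma card_hubPendantEdges : #(hubPendantEdges : Finset (Sym2 𝒱)) = 3 * B := by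
  rw [hubPendantEdges, card_image_of_injective _ fun p q h => by simpa using h, card_univ,
    Fintype.card_fin]

lemma card_crossEdges (g : Fin n → Fin t) : #(crossEdges g : Finset (Sym2 𝒱)) = (t - 1) * n := by
  rw [crossEdges, card_image_of_injective _ fun p q h => Prod.ext_iff.2 (by simpa using h),
    card_filter, Fintype.sum_prod_type]
  simp only [sum_boole, Nat.cast_id, filter_ne, mem_univ, card_erase_of_mem, card_univ,
    Fintype.card_fin, sum_const, smul_eq_mul, mul_comm]

lemma disjoint_crossEdges_hubPendantEdges (g : Fin n → Fin t) :
    Disjoint (crossEdges g : Finset (Sym2 𝒱)) hubPendantEdges := by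
  simp only [Finset.disjoint_left, crossEdges, forall_mem_image]
  simp [hubPendantEdges]

lemma disjoint_crossEdges_bagEdges (g : Fin n → Fin t) (j : Fin t) :
    Disjoint (crossEdges g : Finset (Sym2 𝒱)) (bagEdges g j) := by
  simp only [Finset.disjoint_left, crossEdges, forall_mem_image]
  simp [bagEdges, binPendantEdges, itemPendantEdges]
  intro i j' hne hi hj
  exact hne (hi.trans hj.symm)

lemma coe_bagEdges_subset (g : Fin n → Fin t) (j : Fin t) :
    ((bagEdges g j : Finset (Sym2 𝒱)) : Set (Sym2 𝒱)) ⊆ (𝒢).edgeSet := by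
  simp only [bagEdges, coe_union, coe_biUnion, coe_insert, Set.union_subset_iff,
    Set.iUnion₂_subset_iff, Set.insert_subset_iff]
  refine ⟨?_, fun i _ => ⟨adj_item_bin i j, ?_⟩⟩ <;>
    simp [Set.subset_def, binPendantEdges, itemPendantEdges]

lemma card_bagEdges (ha : ∀ i, 0 < a i) (g : Fin n → Fin t) (j : Fin t) :
    #(bagEdges g j : Finset (Sym2 𝒱)) = 2 * B + ∑ i ∈ univ.filter fun i => g i = j, a i := by
  rw [bagEdges, card_union_of_disjoint, card_biUnion, card_binPendantEdges]
  · congr 1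
    refine sum_congr rfl fun i _ => ?_
    rw [card_insert_of_notMem (by simp [itemPendantEdges]), card_itemPendantEdges]
    have := ha i; omega
  · intro i _ i' _ hii'
    simp [Finset.disjoint_left, itemPendantEdges, hii', hii'.symm]
  · simp [Finset.disjoint_left, binPendantEdges, itemPendantEdges]

section Forward

variable {F : Set (Sym2 (LIVertex n t B a))}

lemma item_hub_mem_of_cost_le (ht : 0 < t) (hbig : ∀ i, t * n < a i)
    (hcost : lineIntegrityCost 𝒢 F ≤ (t - 1) * n + 3 * B + 1)
    {i : Fin n} (hi : (i : ℕ) = n - 1) : s(item i, hub) ∈ F := by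
  by_contra hF
  have hT := card_add_card_le_lineIntegrityCost (G := 𝒢) (F := F) (D := ∅) hub
    (T := insert s(item i, hub) (hubPendantEdges ∪ itemPendantEdges i))
    (by simp [hubPendantEdges, itemPendantEdges, adj_item_hub hi, Set.subset_def, or_imp,
      forall_and])
    (by
      simp only [mem_insert, mem_union, hubPendantEdges, itemPendantEdges, mem_image, mem_univ,
        true_and]
      rintro _ (rfl | ⟨p, rfl⟩ | ⟨p, rfl⟩) -
      · exact ⟨hub, by simp, .refl _⟩
      · exact ⟨hub, by simp, .refl _⟩
      · refine ⟨item i, by simp, Adj.reachable ?_⟩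
        rw [deleteEdges_adj, Sym2.eq_swap]
        exact ⟨(adj_item_hub hi).symm, hF⟩)
    (by simp) (by simp)
  rw [card_insert_of_notMem (by simp [hubPendantEdges, itemPendantEdges]),
    card_union_of_disjoint (by simp [Finset.disjoint_left, hubPendantEdges, itemPendantEdges]),
    card_hubPendantEdges, card_itemPendantEdges, card_empty] at hT
  have := hbig i
  have := Nat.sub_one_mul t n
  have := Nat.le_mul_of_pos_left n ht
  omega

lemma bin_eq_of_item_bin_notMem (hbig : ∀ i, t * n < a i)
    (hcost : lineIntegrityCost 𝒢 F ≤ (t - 1) * n + 3 * B + 1)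
    {i : Fin n} {j j' : Fin t} (hj : s(item i, bin j) ∉ F) (hj' : s(item i, bin j') ∉ F) :
    j = j' := by
  by_contra hjj'
  have hT := card_add_card_le_lineIntegrityCost (G := 𝒢) (F := F) (D := ∅) (item i)
    (T := insert s(item i, bin j) (insert s(item i, bin j')
      (itemPendantEdges i ∪ (binPendantEdges j ∪ binPendantEdges j'))))
    (by simp [itemPendantEdges, binPendantEdges, or_imp, forall_and, Set.subset_def])
    (by
      simp only [mem_insert, mem_union, itemPendantEdges, binPendantEdges, mem_image, mem_univ,
        true_and]
      rintro _ (rfl | rfl | ⟨p, rfl⟩ | ⟨p, rfl⟩ | ⟨p, rfl⟩) -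
      · exact ⟨item i, by simp, .refl _⟩
      · exact ⟨item i, by simp, .refl _⟩
      · exact ⟨item i, by simp, .refl _⟩
      · exact ⟨bin j, by simp, Adj.reachable (by simp [hj])⟩
      · exact ⟨bin j', by simp, Adj.reachable (by simp [hj'])⟩)
    (by simp) (by simp)
  rw [card_insert_of_notMem (by simp [itemPendantEdges, binPendantEdges, hjj']),
    card_insert_of_notMem (by simp [itemPendantEdges, binPendantEdges]),
    card_union_of_disjoint (by simp [Finset.disjoint_left, itemPendantEdges, binPendantEdges]),
    card_union_of_disjoint (by simp [Finset.disjoint_left, binPendantEdges, Ne.symm hjj']),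
    card_itemPendantEdges, card_binPendantEdges, card_binPendantEdges, card_empty] at hT
  have := hbig i
  have := Nat.mul_le_mul_right n (Nat.sub_le t 1)
  omega

lemma exists_crossEdges_subset (ht : 0 < t)
    (huniq : ∀ i j j', s(item i, bin j) ∉ F → s(item i, bin j') ∉ F → j = j') :
    ∃ g : Fin n → Fin t, ∀ e ∈ crossEdges g, e ∈ F := by
  have : ∀ i, ∃ j, ∀ j', j' ≠ j → s(item i, bin j') ∈ F := fun i => by
    by_cases h : ∃ j, s(item i, bin j) ∉ F
    · obtain ⟨j, hj⟩ := h
      exact ⟨j, fun j' hj' => by_contra fun h' => hj' (huniq i j' j h' hj)⟩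
    · simp only [not_exists, not_not] at h
      exact ⟨⟨0, ht⟩, fun j' _ => h j'⟩
  choose g hg using this
  refine ⟨g, fun e he => ?_⟩
  simp only [crossEdges, mem_image, mem_filter, mem_univ, true_and] at he
  obtain ⟨⟨i, j⟩, hj, rfl⟩ := he
  exact hg i j (Ne.symm hj)

lemma item_bin_notMem_of_cost_le {g : Fin n → Fin t} (hg : ∀ e ∈ crossEdges g, e ∈ F)
    {i₀ : Fin n} (hi₀ : s(item i₀, hub) ∈ F)
    (hcost : lineIntegrityCost 𝒢 F ≤ (t - 1) * n + 3 * B + 1) (i : Fin n) :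
    s(item i, bin (g i)) ∉ F := by
  intro hF
  have hT := card_add_card_le_lineIntegrityCost (G := 𝒢) (F := F) hub
    (T := hubPendantEdges)
    (D := insert s(item i₀, hub) (insert s(item i, bin (g i)) (crossEdges g)))
    (by simp [hubPendantEdges, Set.subset_def])
    (by
      simp only [hubPendantEdges, mem_image, mem_univ, true_and]
      rintro _ ⟨p, rfl⟩ -
      exact ⟨hub, by simp, .refl _⟩)
    (by simpa [hi₀, hF] using hg)
    (by
      rw [disjoint_insert_left, disjoint_insert_left]
      exact ⟨by simp [hubPendantEdges], by simp [hubPendantEdges],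
        disjoint_crossEdges_hubPendantEdges g⟩)
  rw [card_insert_of_notMem (by simp [crossEdges]), card_insert_of_notMem (by simp [crossEdges]),
    card_hubPendantEdges, card_crossEdges] at hT
  omega

lemma sum_le_of_cost_le (ha : ∀ i, 0 < a i) {g : Fin n → Fin t}
    (hg : ∀ e ∈ crossEdges g, e ∈ F) {i₀ : Fin n} (hi₀ : s(item i₀, hub) ∈ F)
    (hcost : lineIntegrityCost 𝒢 F ≤ (t - 1) * n + 3 * B + 1) (j : Fin t) :
    ∑ i ∈ univ.filter fun i => g i = j, a i ≤ B := by
  have hT := card_add_card_le_lineIntegrityCost (G := 𝒢) (F := F) (bin j)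
    (T := bagEdges g j) (D := insert s(item i₀, hub) (crossEdges g))
    (coe_bagEdges_subset g j)
    (by
      simp only [bagEdges, mem_union, binPendantEdges, mem_biUnion, mem_filter, mem_insert,
        itemPendantEdges, mem_image, mem_univ, true_and]
      rintro _ (⟨p, rfl⟩ | ⟨i, rfl, rfl | ⟨p, rfl⟩⟩) -
      · exact ⟨bin j, by simp, .refl _⟩
      · exact ⟨bin (g i), by simp, .refl _⟩
      · refine ⟨item i, by simp, (Adj.reachable ?_).symm⟩
        simpa using item_bin_notMem_of_cost_le hg hi₀ hcost i)
    (by simpa [hi₀] using hg)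
    (by
      rw [disjoint_insert_left]
      exact ⟨by simp [bagEdges, binPendantEdges, itemPendantEdges],
        disjoint_crossEdges_bagEdges g j⟩)
  rw [card_insert_of_notMem (by simp [crossEdges]), card_bagEdges ha, card_crossEdges] at hT
  omega

lemma exists_partition_of_cost_le (ht : 0 < t) (ha : ∀ i, 0 < a i) (hsum : ∑ i, a i = t * B)
    (hbig : ∀ i, t * n < a i) {i₀ : Fin n} (hi₀ : (i₀ : ℕ) = n - 1)
    (hcost : lineIntegrityCost 𝒢 F ≤ (t - 1) * n + 3 * B + 1) :
    ∃ g : Fin n → Fin t, ∀ j, ∑ i ∈ univ.filter fun i => g i = j, a i = B := by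
  have hhub := item_hub_mem_of_cost_le ht hbig hcost hi₀
  obtain ⟨g, hg⟩ :=
    exists_crossEdges_subset ht fun i j j' => bin_eq_of_item_bin_notMem hbig hcost
  have hle := fun j => sum_le_of_cost_le ha hg hhub hcost j
  refine ⟨g, fun j => (sum_eq_sum_iff_of_le fun j _ => hle j).1 ?_ j (mem_univ j)⟩
  rw [sum_fiberwise, hsum, sum_const, card_univ, Fintype.card_fin, smul_eq_mul]

end Forward

section Backward

def bagOf (g : Fin n → Fin t) : 𝒱 → Option (Fin t)
  | .inl i => some (g i)
  | .inr (.inl j) => some j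
  | .inr (.inr (.inl s)) => some (g s.1)
  | .inr (.inr (.inr (.inl x))) => some x.1
  | .inr (.inr (.inr (.inr _))) => none

def partitionCut (i₀ : Fin n) (g : Fin n → Fin t) : Finset (Sym2 𝒱) :=
  insert s(item i₀, hub) (crossEdges g)

lemma coe_partitionCut_subset {i₀ : Fin n} (hi₀ : (i₀ : ℕ) = n - 1) (g : Fin n → Fin t) :
    ((partitionCut i₀ g : Finset (Sym2 𝒱)) : Set (Sym2 𝒱)) ⊆ (𝒢).edgeSet := by
  rw [partitionCut, coe_insert, Set.insert_subset_iff, crossEdges, coe_image,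
    Set.image_subset_iff]
  exact ⟨adj_item_hub hi₀, fun p _ => adj_item_bin p.1 p.2⟩

lemma maxComponentEdges_le_of_partition (ha : ∀ i, 0 < a i) {f : Fin n → Fin t}
    (hf : ∀ j, ∑ i ∈ univ.filter fun i => f i = j, a i = B) {i₀ : Fin n}
    (hi₀ : (i₀ : ℕ) = n - 1) :
    maxComponentEdges ((𝒢).deleteEdges ↑(partitionCut i₀ f : Finset (Sym2 𝒱))) ≤ 3 * B := by
  refine maxComponentEdges_le_of_cover (bagOf f)
    (fun r => ↑(r.elim hubPendantEdges (bagEdges f) : Finset (Sym2 𝒱))) (fun e he => ?_) ?_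
  · rw [edgeSet_deleteEdges] at he
    obtain ⟨he, hF⟩ := he
    rcases mem_edgeSet_liGraph he with ⟨i, j, rfl⟩ | ⟨i, p, rfl⟩ | ⟨j, p, rfl⟩ | ⟨p, rfl⟩ |
      ⟨i, hi, rfl⟩
    · obtain rfl : f i = j := by_contra fun h => hF (by simp [partitionCut, crossEdges, h])
      exact ⟨some (f i), by simp [bagOf], by simpa [bagEdges] using .inr ⟨i, rfl, .inl rfl⟩⟩
    · exact ⟨some (f i), by simp [bagOf], by simp [bagEdges, itemPendantEdges]⟩
    · exact ⟨some j, by simp [bagOf], by simp [bagEdges, binPendantEdges]⟩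
    · exact ⟨none, by simp [bagOf], by simp [hubPendantEdges]⟩
    · exact absurd (by simp [partitionCut, Fin.ext (hi.trans hi₀.symm)]) hF
  · rintro (_ | j)
    · simp [card_hubPendantEdges]
    · simp [card_bagEdges ha, hf j]
      omega

lemma cost_le_of_partition (ha : ∀ i, 0 < a i) {f : Fin n → Fin t}
    (hf : ∀ j, ∑ i ∈ univ.filter fun i => f i = j, a i = B) {i₀ : Fin n}
    (hi₀ : (i₀ : ℕ) = n - 1) :
    lineIntegrityCost 𝒢 ↑(partitionCut i₀ f : Finset (Sym2 𝒱)) ≤ (t - 1) * n + 3 * B + 1 := by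
  have hcard : #(partitionCut i₀ f : Finset (Sym2 𝒱)) ≤ (t - 1) * n + 1 :=
    (card_insert_le _ _).trans (by rw [card_crossEdges])
  have := maxComponentEdges_le_of_partition ha hf hi₀
  rw [lineIntegrityCost, Set.ncard_coe_finset]
  omega

end Backward
end Construction
end VI

open VI SimpleGraph in
theorem statement13_general (n t B k : ℕ) (hn : 2 ≤ n) (ht : 0 < t)
    (a : Fin n → ℕ) (ha : ∀ i, 0 < a i) (hsum : ∑ i, a i = t * B)
    (hbig : ∀ i, t * n < a i) (hk : k = (t - 1) * n + 3 * B + 1) :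
    (∃ F : Set (Sym2 (LIVertex n t B a)), F ⊆ (liGraph n t B a).edgeSet ∧
      F.ncard + sSup {m | ∃ C : ((liGraph n t B a).deleteEdges F).ConnectedComponent,
        m = {e ∈ ((liGraph n t B a).deleteEdges F).edgeSet |
              ∀ v ∈ e, v ∈ C.supp}.ncard} ≤ k) ↔
      ∃ f : Fin n → Fin t,
        ∀ j : Fin t, ∑ i ∈ Finset.univ.filter (fun i => f i = j), a i = B := by
  obtain ⟨i₀, hi₀⟩ : ∃ i₀ : Fin n, (i₀ : ℕ) = n - 1 := ⟨⟨n - 1, by omega⟩, rfl⟩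
  subst hk
  constructor
  · rintro ⟨F, -, hF⟩
    exact exists_partition_of_cost_le ht ha hsum hbig hi₀ hF
  · rintro ⟨f, hf⟩
    exact ⟨_, coe_partitionCut_subset hi₀ f, cost_le_of_partition ha hf hi₀⟩

open VI SimpleGraph in
/-- There is `F ⊆ E(G)` with `|F| + max_{C ∈ cc(G−F)} |E(C)| ≤ k` iff `{1, …, n}` can be
partitioned into `t` parts of weight `B` each. -/
theorem statement13 (n t B k : ℕ) (hn : 2 ≤ n) (ht : 0 < t) (hB : 0 < B)
    (a : Fin n → ℕ) (ha : ∀ i, 0 < a i) (hsum : ∑ i, a i = t * B)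
    (hbig : ∀ i, t * n < a i) (hk : k = (t - 1) * n + 3 * B + 1) :
    (∃ F : Set (Sym2 (LIVertex n t B a)), F ⊆ (liGraph n t B a).edgeSet ∧
      F.ncard + sSup {m | ∃ C : ((liGraph n t B a).deleteEdges F).ConnectedComponent,
        m = {e ∈ ((liGraph n t B a).deleteEdges F).edgeSet |
              ∀ v ∈ e, v ∈ C.supp}.ncard} ≤ k) ↔
      ∃ f : Fin n → Fin t,
        ∀ j : Fin t, ∑ i ∈ Finset.univ.filter (fun i => f i = j), a i = B :=
  statement13_general n t B k hn ht a ha hsum hbig hk
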